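/- Suppose α is a rotationally symmetric norm on L^∞(𝕋) and T : ℒ^α(𝕋) → L^1(𝕋) is a bounded linear operator (bounded from the norm α to ‖·‖₁) such that T(hg) = h·T(g) for every h ∈ L^∞(𝕋) and every g ∈ ℒ^α(𝕋). Then there exists f ∈ ℒ^{α′}(𝕋) such that Tg = fg for every g ∈ ℒ^α(𝕋), and ‖T‖ = α′(f). The same conclusion holds if ℒ^α(𝕋) is replaced by L^α(𝕋). -/

import Mathlib

open MeasureTheory Filter
open scoped ENNReal Real

noncomputable section

instance fact_two_pi_pos : Fact ((0:ℝ) < 2 * Real.pi) := ⟨by positivity⟩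

/-- The circle `𝕋`, modelled additively as `ℝ / 2πℤ`. -/
abbrev 𝕋 : Type := AddCircle (2 * Real.pi)

/-- Normalized Haar (arc-length) probability measure on `𝕋`. -/
abbrev m : Measure 𝕋 := AddCircle.haarAddCircle

/-- A rotationally symmetric norm on `L^∞(𝕋)`, extended to all measurable functions via
`α f = sup { α s : s simple, |s| ≤ |f| a.e. }`. -/
structure RotNorm where
  α : (𝕋 → ℂ) → ℝ≥0∞
  ae_eq : ∀ f g : 𝕋 → ℂ, f =ᵐ[m] g → α f = α g
  add_le : ∀ f g : 𝕋 → ℂ, α (f + g) ≤ α f + α g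
  smul_eq : ∀ (c : ℂ) (f : 𝕋 → ℂ), α (c • f) = (‖c‖₊ : ℝ≥0∞) * α f
  one_eq : α 1 = 1
  abs_eq : ∀ f : 𝕋 → ℂ, α (fun z => (‖f z‖ : ℂ)) = α f
  rot_eq : ∀ (w : 𝕋) (f : 𝕋 → ℂ), α (fun z => f (z - w)) = α f
  simple_sup : ∀ f : 𝕋 → ℂ, AEMeasurable f m →
    α f = ⨆ (s : SimpleFunc 𝕋 ℂ) (_ : ∀ᵐ z ∂m, ‖s z‖ ≤ ‖f z‖), α s

/-- `α` is in addition a symmetric gauge norm: invariant under all invertible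
measure-preserving transformations of `𝕋`. -/
def RotNorm.IsSymmGauge (N : RotNorm) : Prop :=
  ∀ φ : 𝕋 ≃ᵐ 𝕋, MeasurePreserving (⇑φ) m m → ∀ f : 𝕋 → ℂ, N.α (f ∘ ⇑φ) = N.α f

/-- Continuity of a norm: `α(χ_E) → 0` as `m(E) → 0⁺`. -/
def IsContNorm (γ : (𝕋 → ℂ) → ℝ≥0∞) : Prop :=
  ∀ ε : ℝ≥0∞, 0 < ε → ∃ δ : ℝ≥0∞, 0 < δ ∧
    ∀ E : Set 𝕋, MeasurableSet E → m E < δ → γ (E.indicator fun _ => (1:ℂ)) < ε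

/-- Membership in `ℒ^α(𝕋)`: measurable with finite norm. -/
def MemScriptL (γ : (𝕋 → ℂ) → ℝ≥0∞) (f : 𝕋 → ℂ) : Prop :=
  AEMeasurable f m ∧ γ f ≠ ∞

/-- Membership in `L^α(𝕋)`: the `α`-closure of `L^∞(𝕋)` in `ℒ^α(𝕋)`. -/
def MemL (γ : (𝕋 → ℂ) → ℝ≥0∞) (f : 𝕋 → ℂ) : Prop :=
  MemScriptL γ f ∧ ∀ ε : ℝ≥0∞, 0 < ε → ∃ g : 𝕋 → ℂ, MemLp g ⊤ m ∧ γ (f - g) < ε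

/-- Strong continuity: continuity together with `L^α = ℒ^α`. -/
def StronglyCont (γ : (𝕋 → ℂ) → ℝ≥0∞) : Prop :=
  IsContNorm γ ∧ ∀ f : 𝕋 → ℂ, MemScriptL γ f → MemL γ f

/-- The dual norm `α′`. -/
def dualOf (γ : (𝕋 → ℂ) → ℝ≥0∞) (f : 𝕋 → ℂ) : ℝ≥0∞ :=
  ⨆ (h : 𝕋 → ℂ) (_ : MemLp h ⊤ m) (_ : γ h ≤ 1), ∫⁻ z, (‖f z * h z‖₊ : ℝ≥0∞) ∂m

/-- The linear span of the analytic monomials `zⁿ`, `n ≥ 0`. -/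
def analyticPolys : Submodule ℂ (𝕋 → ℂ) :=
  Submodule.span ℂ (Set.range fun n : ℕ => ((fourier (n : ℤ) : C(𝕋, ℂ)) : 𝕋 → ℂ))

/-- Membership in `H^α(𝕋)`: the `α`-closure of the span of `{zⁿ : n ≥ 0}`. -/
def MemH (γ : (𝕋 → ℂ) → ℝ≥0∞) (f : 𝕋 → ℂ) : Prop :=
  MemScriptL γ f ∧ ∀ ε : ℝ≥0∞, 0 < ε → ∃ p ∈ analyticPolys, γ (f - p) < ε

/-- Membership in the classical Hardy space `H¹(𝕋)`. -/
def MemH1 (f : 𝕋 → ℂ) : Prop :=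
  Integrable f m ∧ ∀ n : ℤ, n < 0 → fourierCoeff f n = 0

/-- The point `e^{it}` of the unit circle in `ℂ` corresponding to `t ∈ 𝕋`. -/
def eCirc : 𝕋 → ℂ := fun t => (AddCircle.toCircle t : ℂ)

/-!
Testing the module property on `g = 1` gives `T h = h · T 1` for bounded `h`. For general `g`,
the truncations `χₙ g`, with `χₙ` the indicator of `{|g| ≤ n}`, are bounded, so
`χₙ · T g = T (χₙ g) = χₙ g · T 1`; as these sets exhaust `𝕋`, `T g = T 1 · g`. Hence
`‖T‖ = sup {∫ |T 1 · g| : α g ≤ 1}`, and monotone convergence along the same truncations shows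
that this supremum over `ℒ^α` equals the one over `L^∞` defining `α′(T 1)`.
-/

namespace RotNorm

variable (N : RotNorm)

lemma α_zero : N.α 0 = 0 := by
  simpa using N.smul_eq 0 1

lemma α_mono {f g : 𝕋 → ℂ} (hf : AEMeasurable f m) (hg : AEMeasurable g m)
    (hfg : ∀ᵐ z ∂m, ‖f z‖ ≤ ‖g z‖) : N.α f ≤ N.α g := by
  rw [N.simple_sup f hf, N.simple_sup g hg]
  refine iSup₂_le fun s hs => le_iSup₂_of_le s ?_ le_rfl
  filter_upwards [hs, hfg] with z h₁ h₂ using h₁.trans h₂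

lemma α_ne_top_of_memLp_top {h : 𝕋 → ℂ} (hh : MemLp h ⊤ m) : N.α h ≠ ∞ := by
  set C : ℝ := (eLpNorm h ⊤ m).toReal
  have hbound : ∀ᵐ z ∂m, ‖h z‖ ≤ ‖((C : ℂ) • (1 : 𝕋 → ℂ)) z‖ := by
    filter_upwards [ae_le_eLpNormEssSup (f := h) (μ := m)] with z hz
    have hC : ‖h z‖ ≤ C := by
      rw [← eLpNorm_exponent_top] at hz
      have := ENNReal.toReal_mono hh.eLpNorm_ne_top hz
      rwa [toReal_enorm] at this
    have hC0 : 0 ≤ C := ENNReal.toReal_nonneg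
    simpa only [Pi.smul_apply, Pi.one_apply, smul_eq_mul, mul_one, Complex.norm_real,
      Real.norm_of_nonneg hC0] using hC
  refine ne_top_of_le_ne_top ?_ (N.α_mono hh.aestronglyMeasurable.aemeasurable
    (aemeasurable_one.const_smul (C : ℂ)) hbound)
  rw [N.smul_eq]
  exact ENNReal.mul_ne_top ENNReal.coe_ne_top (N.one_eq.trans_ne ENNReal.one_ne_top)

lemma memL_of_memLp_top {h : 𝕋 → ℂ} (hh : MemLp h ⊤ m) : MemL N.α h :=
  ⟨⟨hh.aestronglyMeasurable.aemeasurable, N.α_ne_top_of_memLp_top hh⟩,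
    fun _ hε => ⟨h, hh, by rwa [sub_self, N.α_zero]⟩⟩

end RotNorm

section Truncation

variable {X 𝕜 : Type*} [RCLike 𝕜]

def truncMask (g : X → 𝕜) (n : ℕ) (z : X) : 𝕜 :=
  (Metric.closedBall (0 : 𝕜) n).indicator 1 (g z)

variable {g : X → 𝕜} {n : ℕ} {z : X}

lemma truncMask_of_norm_le (h : ‖g z‖ ≤ n) : truncMask g n z = 1 :=
  Set.indicator_of_mem (mem_closedBall_zero_iff.mpr h) _

lemma norm_truncMask_le_one : ‖truncMask g n z‖ ≤ 1 := by
  unfold truncMask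
  by_cases h : g z ∈ Metric.closedBall (0 : 𝕜) n <;> simp [h]

lemma norm_truncMask_mul_le : ‖truncMask g n z * g z‖ ≤ n := by
  unfold truncMask
  by_cases h : g z ∈ Metric.closedBall (0 : 𝕜) n
  · rw [Set.indicator_of_mem h, Pi.one_apply, one_mul]
    exact mem_closedBall_zero_iff.mp h
  · simp [h]

lemma monotone_enorm_truncMask : Monotone fun n => ‖truncMask g n z‖ₑ := by
  intro k l hkl
  by_cases h : ‖g z‖ ≤ k
  · dsimp only
    rw [truncMask_of_norm_le h, truncMask_of_norm_le (h.trans (by exact_mod_cast hkl))]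
  · simp [truncMask, h]

lemma iSup_enorm_truncMask : ⨆ n, ‖truncMask g n z‖ₑ = 1 := by
  refine le_antisymm (iSup_le fun _ => ?_) <|
    le_iSup_of_le ⌈‖g z‖⌉₊ (by rw [truncMask_of_norm_le (Nat.le_ceil _), enorm_one])
  rw [← enorm_one (G := 𝕜), enorm_le_iff_norm_le, norm_one]
  exact norm_truncMask_le_one

variable [MeasurableSpace X] {μ : Measure X}

lemma AEMeasurable.truncMask (hg : AEMeasurable g μ) (n : ℕ) :
    AEMeasurable (truncMask g n) μ :=
  (measurable_one.indicator measurableSet_closedBall).comp_aemeasurable hg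

lemma memLp_top_truncMask (hg : AEMeasurable g μ) (n : ℕ) : MemLp (truncMask g n) ⊤ μ :=
  memLp_top_of_bound (hg.truncMask n).aestronglyMeasurable 1
    (.of_forall fun _ => norm_truncMask_le_one)

lemma memLp_top_truncMask_mul (hg : AEMeasurable g μ) (n : ℕ) :
    MemLp (truncMask g n * g) ⊤ μ :=
  memLp_top_of_bound ((hg.truncMask n).mul hg).aestronglyMeasurable n
    (.of_forall fun _ => norm_truncMask_mul_le)

end Truncation

theorem ae_eq_apply_one_mul {X 𝕜 : Type*} [RCLike 𝕜] [MeasurableSpace X] {μ : Measure X}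
    {T : (X → 𝕜) → X → 𝕜} {g : X → 𝕜} (hg : AEMeasurable g μ)
    (hT : ∀ h, MemLp h ⊤ μ → T h =ᵐ[μ] h * T 1)
    (hTg : ∀ h, MemLp h ⊤ μ → T (h * g) =ᵐ[μ] h * T g) :
    T g =ᵐ[μ] T 1 * g := by
  have htrunc : ∀ᵐ z ∂μ, ∀ n : ℕ,
      truncMask g n z * T g z = truncMask g n z * g z * T 1 z := by
    refine ae_all_iff.mpr fun n => ?_
    filter_upwards [hTg _ (memLp_top_truncMask hg n), hT _ (memLp_top_truncMask_mul hg n)]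
      with z h₁ h₂
    exact h₁.symm.trans h₂
  filter_upwards [htrunc] with z hz
  simpa [truncMask_of_norm_le (Nat.le_ceil _), mul_comm] using hz ⌈‖g z‖⌉₊

lemma RotNorm.lintegral_le_dualOf (N : RotNorm) {f g : 𝕋 → ℂ} (hf : AEMeasurable f m)
    (hg : AEMeasurable g m) (hα : N.α g ≤ 1) :
    ∫⁻ z, ‖f z * g z‖ₑ ∂m ≤ dualOf N.α f := by
  have htrunc (n : ℕ) : ∫⁻ z, ‖truncMask g n z‖ₑ * ‖f z * g z‖ₑ ∂m ≤ dualOf N.α f := by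
    have hαn : N.α (truncMask g n * g) ≤ 1 := by
      refine (N.α_mono ((hg.truncMask n).mul hg) hg (.of_forall fun z => ?_)).trans hα
      rw [Pi.mul_apply, norm_mul]
      exact mul_le_of_le_one_left (norm_nonneg _) norm_truncMask_le_one
    refine le_iSup₂_of_le (truncMask g n * g) (memLp_top_truncMask_mul hg n)
      (le_iSup_of_le hαn (le_of_eq ?_))
    refine lintegral_congr fun z => ?_
    change _ = ‖f z * (truncMask g n z * g z)‖ₑ
    simp only [enorm_mul]
    ring
  calc ∫⁻ z, ‖f z * g z‖ₑ ∂m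
      = ∫⁻ z, ⨆ n : ℕ, ‖truncMask g n z‖ₑ * ‖f z * g z‖ₑ ∂m := by
        simp_rw [← ENNReal.iSup_mul, iSup_enorm_truncMask, one_mul]
    _ = ⨆ n : ℕ, ∫⁻ z, ‖truncMask g n z‖ₑ * ‖f z * g z‖ₑ ∂m :=
        lintegral_iSup' (fun n => (hg.truncMask n).enorm.mul (hf.mul hg).enorm)
          (.of_forall fun _ _ _ hkl => by
            dsimp only
            gcongr
            exact monotone_enorm_truncMask hkl)
    _ ≤ dualOf N.α f := iSup_le htrunc

theorem module_map_is_multiplication_general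
    (N : RotNorm) (S : (𝕋 → ℂ) → Prop)
    (hS : (∀ f : 𝕋 → ℂ, S f ↔ MemScriptL N.α f) ∨ (∀ f : 𝕋 → ℂ, S f ↔ MemL N.α f))
    (T : (𝕋 → ℂ) → (𝕋 → ℂ))
    (hmap : ∀ f : 𝕋 → ℂ, S f → Integrable (T f) m)
    (hbdd : ∃ C : ℝ≥0∞, C ≠ ∞ ∧ ∀ f : 𝕋 → ℂ, S f → eLpNorm (T f) 1 m ≤ C * N.α f)
    (hmod : ∀ h : 𝕋 → ℂ, MemLp h ⊤ m → ∀ g : 𝕋 → ℂ, S g → T (h * g) =ᵐ[m] h * T g) :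
    ∃ f : 𝕋 → ℂ, AEMeasurable f m ∧ dualOf N.α f ≠ ∞ ∧
      (∀ g : 𝕋 → ℂ, S g → T g =ᵐ[m] f * g) ∧
      (⨆ (g : 𝕋 → ℂ) (_ : S g) (_ : N.α g ≤ 1), eLpNorm (T g) 1 m) = dualOf N.α f := by
  have hS_memScriptL (g : 𝕋 → ℂ) (hg : S g) : MemScriptL N.α g :=
    hS.elim (fun hS => (hS g).1 hg) (fun hS => ((hS g).1 hg).1)
  have hS_of_memLp_top (h : 𝕋 → ℂ) (hh : MemLp h ⊤ m) : S h :=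
    hS.elim (fun hS => (hS h).2 (N.memL_of_memLp_top hh).1)
      (fun hS => (hS h).2 (N.memL_of_memLp_top hh))
  have hS_one : S 1 := hS_of_memLp_top 1 (memLp_top_const 1)
  set f := T 1
  have hf : AEMeasurable f m := (hmap 1 hS_one).aemeasurable
  have hT (g : 𝕋 → ℂ) (hg : S g) : T g =ᵐ[m] f * g :=
    ae_eq_apply_one_mul (hS_memScriptL g hg).1
      (fun h hh => by simpa using hmod h hh 1 hS_one) (fun h hh => hmod h hh g hg)
  have hnorm (g : 𝕋 → ℂ) (hg : S g) : eLpNorm (T g) 1 m = ∫⁻ z, ‖f z * g z‖ₑ ∂m := by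
    rw [eLpNorm_congr_ae (hT g hg), eLpNorm_one_eq_lintegral_enorm]
    rfl
  have hsup : (⨆ (g : 𝕋 → ℂ) (_ : S g) (_ : N.α g ≤ 1), eLpNorm (T g) 1 m)
      = dualOf N.α f := by
    refine le_antisymm (iSup_le fun g => iSup₂_le fun hg hα => ?_)
      (iSup_le fun h => iSup₂_le fun hh hα => ?_)
    · rw [hnorm g hg]
      exact N.lintegral_le_dualOf hf (hS_memScriptL g hg).1 hα
    · have hhS := hS_of_memLp_top h hh
      exact le_iSup_of_le h (le_iSup₂_of_le hhS hα (hnorm h hhS).ge)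
  obtain ⟨C, hC, hTC⟩ := hbdd
  refine ⟨f, hf, ne_top_of_le_ne_top hC ?_, hT, hsup⟩
  rw [← hsup]
  exact iSup_le fun g => iSup₂_le fun hg hα => (hTC g hg).trans (mul_le_of_le_one_right' hα)

/-- A bounded `L^∞(𝕋)`-module map `T : ℒ^α(𝕋) → L¹(𝕋)` (or
`T : L^α(𝕋) → L¹(𝕋)`) is multiplication by some `f ∈ ℒ^{α′}(𝕋)`, and `‖T‖ = α′(f)`. -/
theorem module_map_is_multiplication
    (N : RotNorm) (S : (𝕋 → ℂ) → Prop)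
    (hS : (∀ f : 𝕋 → ℂ, S f ↔ MemScriptL N.α f) ∨ (∀ f : 𝕋 → ℂ, S f ↔ MemL N.α f))
    (T : (𝕋 → ℂ) → (𝕋 → ℂ))
    (hmap : ∀ f : 𝕋 → ℂ, S f → Integrable (T f) m)
    (hadd : ∀ f g : 𝕋 → ℂ, S f → S g → T (f + g) =ᵐ[m] T f + T g)
    (hsmul : ∀ (c : ℂ) (f : 𝕋 → ℂ), S f → T (c • f) =ᵐ[m] c • T f)
    (haeeq : ∀ f g : 𝕋 → ℂ, S f → S g → f =ᵐ[m] g → T f =ᵐ[m] T g)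
    (hbdd : ∃ C : ℝ≥0∞, C ≠ ∞ ∧ ∀ f : 𝕋 → ℂ, S f → eLpNorm (T f) 1 m ≤ C * N.α f)
    (hmod : ∀ h : 𝕋 → ℂ, MemLp h ⊤ m → ∀ g : 𝕋 → ℂ, S g → T (h * g) =ᵐ[m] h * T g) :
    ∃ f : 𝕋 → ℂ, AEMeasurable f m ∧ dualOf N.α f ≠ ∞ ∧
      (∀ g : 𝕋 → ℂ, S g → T g =ᵐ[m] f * g) ∧
      (⨆ (g : 𝕋 → ℂ) (_ : S g) (_ : N.α g ≤ 1), eLpNorm (T g) 1 m) = dualOf N.α f :=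
  module_map_is_multiplication_general N S hS T hmap hbdd hmod

end
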